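/- Let F be a field of characteristic not 2 and let T_n be the commutative algebra with basis {e, n_1, …, n_{n−1}} and products e² = e, e n_1 = n_1, n_2² = n_1, e n_i = (1/2) n_i for 2 ≤ i ≤ n−1, all other products zero. Then for any idempotent a = e − α² n_1 + Σ_{i=2}^{n−1} α_i n_i with α = α_2, the 1-eigenspace of left multiplication by a is spanned by {a, n_1}, the 0-eigenspace is zero, and the (1/2)-eigenspace is spanned by {2α n_1 − n_2} ∪ {n_i : 3 ≤ i ≤ n−1}. -/

import Mathlib

/-!
With `a 0 = 1`, left multiplication by `a` acts on coordinates as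
`y ↦ (y₀, y₁ + a₁ y₀ + a₂ y₂, ½ (yᵢ + aᵢ y₀) for i ≥ 2)`, so the eigen-equation `a y = c y`
is a small linear system. For `c = 1` it forces `yᵢ = aᵢ y₀` for `i ≥ 2` (the `n₁`-equation then
holds because `a₁ = -a₂²`), leaving `y₀, y₁` free: `y = y₀ a + (y₁ - y₀ a₁) n₁`. For `c = 0` it
forces `y = 0`. For `c = ½` it forces `y₀ = 0` and `y₁ = -2 a₂ y₂`, leaving `y₂, y₃, …` free:
`y = -y₂ (2 a₂ n₁ - n₂) + Σ_{i ≥ 3} yᵢ nᵢ`. All of this needs `2 ≠ 0` to solve `½ yᵢ = …`.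
-/

/-- The Jordan algebra `T_{n+3}` on basis `e = δ_0, n_1 = δ_1, n_2 = δ_2, …`:
`e² = e`, `e n₁ = n₁`, `n₂² = n₁`, `e nᵢ = ½ nᵢ` for `i ≥ 2`, other
products zero. -/
def Tmul {F : Type*} [Field F] (n : ℕ) (x y : Fin (n + 3) → F) :
    Fin (n + 3) → F :=
  fun i =>
    if i = 0 then x 0 * y 0
    else if i = 1 then x 0 * y 1 + x 1 * y 0 + x 2 * y 2
    else (2 : F)⁻¹ * (x 0 * y i + x i * y 0)

theorem mem_span_setOf_single_of_forall_not {R ι : Type*} [Semiring R] [Fintype ι]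
    [DecidableEq ι] (p : ι → Prop) {w : ι → R} (hw : ∀ i, ¬ p i → w i = 0) :
    w ∈ Submodule.span R {v : ι → R | ∃ i, p i ∧ v = Pi.single i 1} := by
  rw [pi_eq_sum_univ' w]
  refine Submodule.sum_mem _ fun i _ => ?_
  by_cases hi : p i
  · exact Submodule.smul_mem _ _ (Submodule.subset_span ⟨i, hi, rfl⟩)
  · simp [hw i hi]

namespace Fin

variable {n : ℕ}

theorem two_ne_zero : (2 : Fin (n + 3)) ≠ 0 := by
  simp only [ne_eq, Fin.ext_iff, Fin.val_two, Fin.val_zero]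
  omega

theorem two_ne_one : (2 : Fin (n + 3)) ≠ 1 := by
  simp only [ne_eq, Fin.ext_iff, Fin.val_two, Fin.val_one]
  omega

theorem eq_zero_or_eq_one_or_eq_two_of_lt_three {i : Fin (n + 3)} (hi : (i : ℕ) < 3) :
    i = 0 ∨ i = 1 ∨ i = 2 := by
  simp only [Fin.ext_iff, Fin.val_zero, Fin.val_one, Fin.val_two]
  omega

theorem ne_zero_one_two_of_three_le {i : Fin (n + 3)} (hi : 3 ≤ (i : ℕ)) :
    i ≠ 0 ∧ i ≠ 1 ∧ i ≠ 2 := by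
  simp only [ne_eq, Fin.ext_iff, Fin.val_zero, Fin.val_one, Fin.val_two]
  omega

end Fin

namespace Tmul

variable {F : Type*} [Field F] {n : ℕ}

theorem apply_zero (x y : Fin (n + 3) → F) : Tmul n x y 0 = x 0 * y 0 := by
  simp [Tmul]

theorem apply_one (x y : Fin (n + 3) → F) :
    Tmul n x y 1 = x 0 * y 1 + x 1 * y 0 + x 2 * y 2 := by
  simp [Tmul]

theorem apply_of_ne (x y : Fin (n + 3) → F) {i : Fin (n + 3)} (hi0 : i ≠ 0) (hi1 : i ≠ 1) :
    Tmul n x y i = 2⁻¹ * (x 0 * y i + x i * y 0) := by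
  simp [Tmul, hi0, hi1]

def mulLeft (n : ℕ) (x : Fin (n + 3) → F) : Module.End F (Fin (n + 3) → F) where
  toFun := Tmul n x
  map_add' y z := by
    funext i
    simp only [Tmul, Pi.add_apply]
    split_ifs <;> ring
  map_smul' c y := by
    funext i
    simp only [Tmul, Pi.smul_apply, smul_eq_mul, RingHom.id_apply]
    split_ifs <;> ring

theorem mem_eigenspace_mulLeft {x y : Fin (n + 3) → F} {c : F} :
    y ∈ (mulLeft n x).eigenspace c ↔ Tmul n x y = c • y :=
  Module.End.mem_eigenspace_iff

theorem coe_eigenspace_mulLeft (x : Fin (n + 3) → F) (c : F) :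
    ((mulLeft n x).eigenspace c : Set (Fin (n + 3) → F)) = {y | Tmul n x y = c • y} :=
  Set.ext fun _ => mem_eigenspace_mulLeft

variable {a : Fin (n + 3) → F}

theorem eq_smul_iff {y : Fin (n + 3) → F} (c : F) (h0 : a 0 = 1) :
    Tmul n a y = c • y ↔
      y 0 = c * y 0 ∧ y 1 + a 1 * y 0 + a 2 * y 2 = c * y 1 ∧
      ∀ i, i ≠ 0 → i ≠ 1 → 2⁻¹ * (y i + a i * y 0) = c * y i := by
  simp only [funext_iff, Pi.smul_apply, smul_eq_mul]
  constructor
  · intro h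
    refine ⟨?_, ?_, fun i hi0 hi1 => ?_⟩
    · simpa [apply_zero, h0] using h 0
    · simpa [apply_one, h0] using h 1
    · simpa [apply_of_ne _ _ hi0 hi1, h0] using h i
  · rintro ⟨hy0, hy1, hy⟩ i
    by_cases hi0 : i = 0
    · simpa [hi0, apply_zero, h0] using hy0
    by_cases hi1 : i = 1
    · simpa [hi1, apply_one, h0] using hy1
    · simpa [apply_of_ne _ _ hi0 hi1, h0] using hy i hi0 hi1

theorem eigenspace_mulLeft_one (hchar : (2 : F) ≠ 0) (h0 : a 0 = 1) (h1 : a 1 = -(a 2) ^ 2) :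
    (mulLeft n a).eigenspace 1 = Submodule.span F {a, Pi.single 1 1} := by
  have hhalf : 2 * (2 : F)⁻¹ = 1 := mul_inv_cancel₀ hchar
  refine le_antisymm (fun y hy => ?_) ?_
  · obtain ⟨-, -, hy⟩ := (eq_smul_iff 1 h0).1 (mem_eigenspace_mulLeft.1 hy)
    refine Submodule.mem_span_pair.2 ⟨y 0, y 1 - y 0 * a 1, funext fun i => ?_⟩
    by_cases hi0 : i = 0
    · simp [hi0, h0]
    by_cases hi1 : i = 1
    · simp [hi1]
    · simp only [Pi.add_apply, Pi.smul_apply, smul_eq_mul, Pi.single_eq_of_ne hi1]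
      linear_combination 2 * hy i hi0 hi1 - (y i + a i * y 0) * hhalf
  · refine Submodule.span_le.2 (Set.insert_subset_iff.2 ⟨?_, Set.singleton_subset_iff.2 ?_⟩) <;>
      rw [SetLike.mem_coe, mem_eigenspace_mulLeft, eq_smul_iff 1 h0]
    · refine ⟨by simp [h0], by rw [h0, h1]; ring, fun i _ _ => ?_⟩
      rw [h0]
      linear_combination a i * hhalf
    · exact ⟨by simp, by simp [Pi.single_eq_of_ne Fin.two_ne_one], fun i _ hi1 => by
        simp [Pi.single_eq_of_ne hi1]⟩

theorem eigenspace_mulLeft_zero (hchar : (2 : F) ≠ 0) (h0 : a 0 = 1) :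
    (mulLeft n a).eigenspace 0 = ⊥ := by
  refine eq_bot_iff.2 fun y hy => ?_
  obtain ⟨hy0, hy1, hy⟩ := (eq_smul_iff 0 h0).1 (mem_eigenspace_mulLeft.1 hy)
  simp only [zero_mul] at hy0 hy1 hy
  have hy2 : ∀ i, i ≠ 0 → i ≠ 1 → y i = 0 := fun i hi0 hi1 => by
    simpa [hy0, hchar] using hy i hi0 hi1
  refine (Submodule.mem_bot F).2 (funext fun i => ?_)
  by_cases hi0 : i = 0
  · rw [hi0, hy0, Pi.zero_apply]
  by_cases hi1 : i = 1
  · simpa [hi1, hy0, hy2 2 Fin.two_ne_zero Fin.two_ne_one] using hy1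
  · exact hy2 i hi0 hi1

theorem eigenspace_mulLeft_half (hchar : (2 : F) ≠ 0) (h0 : a 0 = 1) :
    (mulLeft n a).eigenspace 2⁻¹ = Submodule.span F
      ({(2 * a 2) • (Pi.single 1 1 : Fin (n + 3) → F) - Pi.single 2 1} ∪
        {v : Fin (n + 3) → F | ∃ i : Fin (n + 3), 3 ≤ (i : ℕ) ∧ v = Pi.single i 1}) := by
  have hhalf : 2 * (2 : F)⁻¹ = 1 := mul_inv_cancel₀ hchar
  set v : Fin (n + 3) → F := (2 * a 2) • Pi.single 1 1 - Pi.single 2 1 with hv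
  have hv0 : v 0 = 0 := by simp [hv, Pi.single_eq_of_ne Fin.two_ne_zero.symm]
  have hv1 : v 1 = 2 * a 2 := by simp [hv, Pi.single_eq_of_ne Fin.two_ne_one.symm]
  have hv2 : v 2 = -1 := by simp [hv, Pi.single_eq_of_ne Fin.two_ne_one]
  refine le_antisymm (fun y hy => ?_) ?_
  · obtain ⟨hy0, hy1, -⟩ := (eq_smul_iff 2⁻¹ h0).1 (mem_eigenspace_mulLeft.1 hy)
    replace hy0 : y 0 = 0 := by linear_combination 2 * hy0 + y 0 * hhalf
    replace hy1 : y 1 = -(2 * a 2 * y 2) := by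
      linear_combination 2 * hy1 + y 1 * hhalf - 2 * a 1 * hy0
    have hdecomp : y = (-y 2) • v + (y + y 2 • v) := by
      rw [neg_smul]
      abel
    rw [hdecomp, Submodule.span_union]
    refine Submodule.add_mem_sup (Submodule.smul_mem _ _ (Submodule.mem_span_singleton_self v))
      (mem_span_setOf_single_of_forall_not _ fun i hi => ?_)
    rcases Fin.eq_zero_or_eq_one_or_eq_two_of_lt_three (not_le.1 hi) with rfl | rfl | rfl
    · simp [hy0, hv0]
    · simp only [Pi.add_apply, Pi.smul_apply, smul_eq_mul, hy1, hv1]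
      ring
    · simp [hv2]
  · refine Submodule.span_le.2 (Set.union_subset ?_ ?_)
    · rw [Set.singleton_subset_iff, SetLike.mem_coe, mem_eigenspace_mulLeft, eq_smul_iff _ h0]
      refine ⟨by simp [hv0], ?_, fun i _ _ => by simp [hv0]⟩
      rw [hv0, hv1, hv2]
      linear_combination (-(a 2)) * hhalf
    · rintro _ ⟨i, hi, rfl⟩
      obtain ⟨hi0, hi1, hi2⟩ := Fin.ne_zero_one_two_of_three_le hi
      rw [SetLike.mem_coe, mem_eigenspace_mulLeft, eq_smul_iff _ h0]
      simp [Pi.single_eq_of_ne hi0.symm, Pi.single_eq_of_ne hi1.symm, Pi.single_eq_of_ne hi2.symm]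

end Tmul

/-- eigenspaces of an idempotent
`a = e − α² n₁ + Σ_{i≥2} αᵢ nᵢ` (with `α = α₂`) of `T_n`: the 1-eigenspace is
spanned by `{a, n₁}`, the 0-eigenspace is zero, and the ½-eigenspace is
spanned by `{2α n₁ − n₂} ∪ {nᵢ : i ≥ 3}`. -/
theorem stmt_17 {F : Type*} [Field F] (hchar : (2 : F) ≠ 0) (n : ℕ)
    (a : Fin (n + 3) → F) (h0 : a 0 = 1) (h1 : a 1 = -(a 2) ^ 2) :
    {y : Fin (n + 3) → F | Tmul n a y = y} =
      ↑(Submodule.span F ({a, Pi.single 1 1} : Set (Fin (n + 3) → F))) ∧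
    {y : Fin (n + 3) → F | Tmul n a y = 0} = {0} ∧
    {y : Fin (n + 3) → F | Tmul n a y = (2 : F)⁻¹ • y} =
      ↑(Submodule.span F
        ({(2 * a 2) • (Pi.single 1 1 : Fin (n + 3) → F) - Pi.single 2 1} ∪
          {v : Fin (n + 3) → F |
            ∃ i : Fin (n + 3), 3 ≤ (i : ℕ) ∧ v = Pi.single i 1})) := by
  refine ⟨?_, ?_, ?_⟩
  · rw [← Tmul.eigenspace_mulLeft_one hchar h0 h1, Tmul.coe_eigenspace_mulLeft]
    simp only [one_smul]
  · rw [← Submodule.bot_coe (R := F), ← Tmul.eigenspace_mulLeft_zero hchar h0,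
      Tmul.coe_eigenspace_mulLeft]
    simp only [zero_smul]
  · rw [← Tmul.eigenspace_mulLeft_half hchar h0, Tmul.coe_eigenspace_mulLeft]
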